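/- arXiv:2406.00145 — 3 statements merged into one kernel-verified Lean document; each statement's English description precedes it below -/
import Mathlib

section
/- With R↑(λ) = (i/λ)·√(ω₁+ω₂)·(ω₂/(ω₁+ω₂))^{iλ/(2πω₁)}·(ω₁/(ω₁+ω₂))^{iλ/(2πω₂)}·Γ(1 − iλ/(2πω₁))Γ(1 − iλ/(2πω₂))/Γ(1 − iλ(ω₁+ω₂)/(2πω₁ω₂)) and R↓(λ) = (λ/(2π√(ω₁+ω₂)))·(ω₂/(ω₁+ω₂))^{−iλ/(2πω₁)}·(ω₁/(ω₁+ω₂))^{−iλ/(2πω₂)}·Γ(iλ/(2πω₁))Γ(iλ/(2πω₂))/Γ(iλ(ω₁+ω₂)/(2πω₁ω₂)), one has R↑(λ)·R↓(λ) = sinh[(λ/2)(1/ω₁+1/ω₂)] / (2 sinh[λ/(2ω₁)] sinh[λ/(2ω₂)]) for all real λ ≠ 0 in the common domain of definition. -/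
open Real Complex

noncomputable def Rup (ω₁ ω₂ : ℝ) (lam : ℂ) : ℂ :=
  (Complex.I / lam) * (Real.sqrt (ω₁ + ω₂) : ℂ) *
    ((ω₂ / (ω₁ + ω₂) : ℝ) : ℂ) ^ (Complex.I * lam / (2 * π * ω₁)) *
    ((ω₁ / (ω₁ + ω₂) : ℝ) : ℂ) ^ (Complex.I * lam / (2 * π * ω₂)) *
    (Complex.Gamma (1 - Complex.I * lam / (2 * π * ω₁)) *
      Complex.Gamma (1 - Complex.I * lam / (2 * π * ω₂))) /
    Complex.Gamma (1 - Complex.I * lam * (ω₁ + ω₂) / (2 * π * ω₁ * ω₂))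

noncomputable def Rdown (ω₁ ω₂ : ℝ) (lam : ℂ) : ℂ :=
  (lam / (2 * π * (Real.sqrt (ω₁ + ω₂) : ℂ))) *
    ((ω₂ / (ω₁ + ω₂) : ℝ) : ℂ) ^ (-(Complex.I * lam) / (2 * π * ω₁)) *
    ((ω₁ / (ω₁ + ω₂) : ℝ) : ℂ) ^ (-(Complex.I * lam) / (2 * π * ω₂)) *
    (Complex.Gamma (Complex.I * lam / (2 * π * ω₁)) *
      Complex.Gamma (Complex.I * lam / (2 * π * ω₂))) /
    Complex.Gamma (Complex.I * lam * (ω₁ + ω₂) / (2 * π * ω₁ * ω₂))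

/-!
With `a = iλ/(2πω₁)` and `b = iλ/(2πω₂)`, the third Gamma argument of `R↑` and `R↓` is `a + b`, and
the powers of `ω₂/(ω₁+ω₂)` and `ω₁/(ω₁+ω₂)` in the two factors cancel. What remains is
`(i/2π) · Γ(a)Γ(1-a) Γ(b)Γ(1-b) / (Γ(a+b)Γ(1-a-b))`, which the reflection formula
`Γ(z)Γ(1-z) = π / sin(πz)` turns into `(i/2) sin(π(a+b)) / (sin(πa) sin(πb))`; finally
`sin(xi) = i sinh x`.
-/

noncomputable def Complex.gammaReflectionRatio (a b : ℂ) : ℂ :=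
  Gamma a * Gamma (1 - a) * (Gamma b * Gamma (1 - b)) / (Gamma (a + b) * Gamma (1 - (a + b)))

/-- At the poles both sides are `0`, since Mathlib's `Gamma` vanishes there and `x / 0 = 0`. -/
lemma Complex.gammaReflectionRatio_eq (a b : ℂ) :
    gammaReflectionRatio a b = π * sin (π * (a + b)) / (sin (π * a) * sin (π * b)) := by
  simp only [gammaReflectionRatio, Gamma_mul_Gamma_one_sub, div_eq_mul_inv, mul_inv, inv_inv]
  field_simp

lemma Complex.cpow_mul_cpow_neg {x : ℂ} (hx : x ≠ 0) (a : ℂ) : x ^ a * x ^ (-a) = 1 := by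
  rw [← cpow_add _ _ hx, add_neg_cancel, cpow_zero]

lemma Rup_mul_Rdown_eq_gammaReflectionRatio {ω₁ ω₂ : ℝ} (hω₁ : ω₁ ≠ 0) (hω₂ : ω₂ ≠ 0)
    (hsum : 0 < ω₁ + ω₂) {lam : ℂ} (hlam : lam ≠ 0) :
    Rup ω₁ ω₂ lam * Rdown ω₁ ω₂ lam =
      I / (2 * π) * gammaReflectionRatio (I * lam / (2 * π * ω₁)) (I * lam / (2 * π * ω₂)) := by
  have hω₁C : (ω₁ : ℂ) ≠ 0 := ofReal_ne_zero.mpr hω₁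
  have hω₂C : (ω₂ : ℂ) ≠ 0 := ofReal_ne_zero.mpr hω₂
  have hsqrt : (√(ω₁ + ω₂) : ℂ) ≠ 0 := ofReal_ne_zero.mpr (sqrt_pos.mpr hsum).ne'
  have h₂ := cpow_mul_cpow_neg (ofReal_ne_zero.mpr (div_ne_zero hω₂ hsum.ne'))
    (I * lam / (2 * π * ω₁))
  have h₁ := cpow_mul_cpow_neg (ofReal_ne_zero.mpr (div_ne_zero hω₁ hsum.ne'))
    (I * lam / (2 * π * ω₂))
  have hsplit : I * lam * (ω₁ + ω₂) / (2 * π * ω₁ * ω₂) =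
      I * lam / (2 * π * ω₁) + I * lam / (2 * π * ω₂) := by
    field_simp; ring
  unfold Rup Rdown
  rw [hsplit, neg_div, neg_div]
  calc _ = I / lam * (lam / (2 * π * √(ω₁ + ω₂))) * √(ω₁ + ω₂) *
        ((((ω₂ / (ω₁ + ω₂) : ℝ) : ℂ) ^ (I * lam / (2 * π * ω₁)) *
          ((ω₂ / (ω₁ + ω₂) : ℝ) : ℂ) ^ (-(I * lam / (2 * π * ω₁)))) *
        (((ω₁ / (ω₁ + ω₂) : ℝ) : ℂ) ^ (I * lam / (2 * π * ω₂)) *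
          ((ω₁ / (ω₁ + ω₂) : ℝ) : ℂ) ^ (-(I * lam / (2 * π * ω₂))))) *
        gammaReflectionRatio (I * lam / (2 * π * ω₁)) (I * lam / (2 * π * ω₂)) := by
          unfold gammaReflectionRatio; ring
    _ = _ := by rw [h₁, h₂]; field_simp

theorem Rup_mul_Rdown {ω₁ ω₂ : ℝ} (hω₁ : ω₁ ≠ 0) (hω₂ : ω₂ ≠ 0) (hsum : 0 < ω₁ + ω₂) {lam : ℂ}
    (hlam : lam ≠ 0) :
    Rup ω₁ ω₂ lam * Rdown ω₁ ω₂ lam =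
      sinh (lam / 2 * (1 / ω₁ + 1 / ω₂)) / (2 * sinh (lam / (2 * ω₁)) * sinh (lam / (2 * ω₂))) := by
  have arg₁ : π * (I * lam / (2 * π * ω₁)) = lam / (2 * ω₁) * I := by field_simp
  have arg₂ : π * (I * lam / (2 * π * ω₂)) = lam / (2 * ω₂) * I := by field_simp
  have arg₁₂ : π * (I * lam / (2 * π * ω₁) + I * lam / (2 * π * ω₂)) =
      lam / 2 * (1 / ω₁ + 1 / ω₂) * I := by field_simp
  rw [Rup_mul_Rdown_eq_gammaReflectionRatio hω₁ hω₂ hsum hlam, gammaReflectionRatio_eq, arg₁, arg₂,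
    arg₁₂, sin_mul_I, sin_mul_I, sin_mul_I]
  field_simp

/-- Wiener–Hopf factorisation `R = R↑ · R↓` of the sinh-kernel symbol, for real `λ ≠ 0`. -/
theorem wiener_hopf_factorisation (ω₁ ω₂ : ℝ) (hω₁ : 0 < ω₁) (hω₂ : 0 < ω₂)
    (lam : ℝ) (hlam : lam ≠ 0) :
    Rup ω₁ ω₂ (lam : ℂ) * Rdown ω₁ ω₂ (lam : ℂ) =
      Complex.sinh ((lam : ℂ) / 2 * (1 / ω₁ + 1 / ω₂)) /
        (2 * Complex.sinh ((lam : ℂ) / (2 * ω₁)) * Complex.sinh ((lam : ℂ) / (2 * ω₂))) :=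
  Rup_mul_Rdown hω₁.ne' hω₂.ne' (add_pos hω₁ hω₂) (ofReal_ne_zero.mpr hlam)
end

section
/- Let r ≥ r₀ for r₀ sufficiently large, N ≥ 1, τ_N = ln N ≥ 1, α ∈ ℝ, and let g : ℝ → ℝ satisfy 0 ≤ g(μ) ≤ c e^{−r c' cosh μ} for constants c, c' > 0. Then the potential V(λ) = (r/(N τ_N)) cosh(τ_N λ) − α λ/N − (1/(2πN)) ∫_ℝ g(τ_N μ)/cosh(τ_N(λ−μ)) dμ is strictly convex on ℝ; more precisely V''(λ) ≥ (τ_N/N)(r − C e^{−r c'}) > 0 for some constant C independent of r, N. -/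
/-!
Differentiating twice under the integral (the kernel `sech` has derivatives bounded by `1` and
`3`) gives `V''(λ) = (rτ/N) cosh(τλ) - (τ²/(2πN)) ∫ g(τμ) sech''(τ(λ-μ)) dμ`. Since
`cosh μ ≥ 1 + μ²/2`, the hypothesis dominates `g` by `c e^{-rc'}` times a Gaussian, so
`∫ |g| ≤ c e^{-rc'} √(2π/c')`; the substitution `μ ↦ τμ` contributes a factor `τ⁻¹`. With
`cosh ≥ 1` this yields `V'' ≥ (τ/N)(r - C e^{-rc'})` for `C = 3c√(2π/c')/(2π)`, which is positive
as soon as `r > C`.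
-/

open Real MeasureTheory

namespace Real

theorem one_add_sq_div_two_le_cosh (x : ℝ) : 1 + x ^ 2 / 2 ≤ cosh x := by
  have hy : 0 ≤ |x| / 2 := by positivity
  calc 1 + x ^ 2 / 2 = 1 + 2 * (|x| / 2) ^ 2 := by rw [← sq_abs x]; ring
    _ ≤ 1 + 2 * sinh (|x| / 2) ^ 2 := by gcongr; exact self_le_sinh_iff.2 hy
    _ = cosh (2 * (|x| / 2)) := by rw [cosh_two_mul, cosh_sq]; ring
    _ = cosh x := by rw [mul_div_cancel₀ _ two_ne_zero, cosh_abs]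

theorem exp_neg_mul_cosh_le {r a : ℝ} (hr : 1 ≤ r) (ha : 0 ≤ a) (x : ℝ) :
    exp (-r * a * cosh x) ≤ exp (-r * a) * exp (-(a / 2) * x ^ 2) := by
  rw [← exp_add, exp_le_exp]
  nlinarith [mul_le_mul_of_nonneg_left (one_add_sq_div_two_le_cosh x)
    (mul_nonneg (zero_le_one.trans hr) ha),
    mul_nonneg (mul_nonneg (sub_nonneg.2 hr) ha) (sq_nonneg x)]

theorem hasDerivAt_inv_cosh (t : ℝ) :
    HasDerivAt (fun s => (cosh s)⁻¹) (-sinh t / cosh t ^ 2) t :=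
  (hasDerivAt_cosh t).inv (cosh_pos t).ne'

theorem hasDerivAt_neg_sinh_div_cosh_sq (t : ℝ) :
    HasDerivAt (fun s => -sinh s / cosh s ^ 2)
      ((2 * sinh t ^ 2 - cosh t ^ 2) / cosh t ^ 3) t := by
  have hnum : HasDerivAt (fun s => -sinh s) (-cosh t) t := (hasDerivAt_sinh t).neg
  have hden : HasDerivAt (fun s => cosh s ^ 2) (2 * cosh t * sinh t) t :=
    ((hasDerivAt_cosh t).pow 2).congr_deriv (by simp)
  refine (hnum.div hden (pow_pos (cosh_pos t) 2).ne').congr_deriv ?_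
  field_simp
  rw [cosh_sq]
  ring

theorem abs_inv_cosh_le_one (t : ℝ) : |(cosh t)⁻¹| ≤ 1 := by
  rw [abs_inv, abs_of_pos (cosh_pos t)]
  exact inv_le_one_of_one_le₀ (one_le_cosh t)

theorem abs_neg_sinh_div_cosh_sq_le_one (t : ℝ) : |-sinh t / cosh t ^ 2| ≤ 1 := by
  have hsinh : |sinh t| ≤ cosh t := by
    rw [← abs_of_pos (cosh_pos t), ← sq_le_sq, cosh_sq]
    linarith
  rw [abs_div, abs_neg, abs_pow, abs_of_pos (cosh_pos t), div_le_one (by positivity)]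
  nlinarith [one_le_cosh t]

theorem abs_two_sinh_sq_sub_cosh_sq_div_cosh_pow_three_le (t : ℝ) :
    |(2 * sinh t ^ 2 - cosh t ^ 2) / cosh t ^ 3| ≤ 3 := by
  have hcosh := one_le_cosh t
  rw [abs_div, abs_pow, abs_of_pos (cosh_pos t), div_le_iff₀ (by positivity), abs_le, sinh_sq]
  constructor <;> nlinarith [pow_le_pow_left₀ zero_le_one hcosh 2]

end Real

section KernelConv

variable {k k' G : ℝ → ℝ} {A B : ℝ}

noncomputable def kernelConv (k : ℝ → ℝ) (τ : ℝ) (G : ℝ → ℝ) (x : ℝ) : ℝ :=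
  ∫ μ, G μ * k (τ * (x - μ))

theorem integrable_mul_comp_of_abs_le (hk : Continuous k) (hkA : ∀ t, |k t| ≤ A)
    (hG : Integrable G) (τ x : ℝ) : Integrable fun μ => G μ * k (τ * (x - μ)) :=
  hG.mul_bdd (by fun_prop : Continuous fun μ => k (τ * (x - μ))).aestronglyMeasurable
    (ae_of_all _ fun μ => hkA _)

theorem abs_kernelConv_le (hkB : ∀ t, |k t| ≤ B) (hG : Integrable G) (τ x : ℝ) :
    |kernelConv k τ G x| ≤ B * ∫ μ, |G μ| := by
  rw [← integral_const_mul, ← Real.norm_eq_abs]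
  refine norm_integral_le_of_norm_le (hG.abs.const_mul B) (ae_of_all _ fun μ => ?_)
  rw [norm_mul, mul_comm B]
  exact mul_le_mul_of_nonneg_left (hkB _) (abs_nonneg _)

theorem hasDerivAt_kernelConv (hk : ∀ t, HasDerivAt k (k' t) t) (hk' : Continuous k')
    (hkA : ∀ t, |k t| ≤ A) (hk'B : ∀ t, |k' t| ≤ B) (hG : Integrable G) (τ x : ℝ) :
    HasDerivAt (kernelConv k τ G) (τ * kernelConv k' τ G x) x := by
  have hkc : Continuous k := continuous_iff_continuousAt.2 fun t => (hk t).continuousAt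
  have hF' : ∀ y, Integrable fun μ => τ * (G μ * k' (τ * (y - μ))) := fun y =>
    (integrable_mul_comp_of_abs_le hk' hk'B hG τ y).const_mul τ
  have key := hasDerivAt_integral_of_dominated_loc_of_deriv_le (x₀ := x)
    (F := fun y μ => G μ * k (τ * (y - μ))) (F' := fun y μ => τ * (G μ * k' (τ * (y - μ))))
    (bound := fun μ => |τ| * B * |G μ|) Filter.univ_mem
    (Filter.Eventually.of_forall fun y => (integrable_mul_comp_of_abs_le hkc hkA hG τ y).1)
    (integrable_mul_comp_of_abs_le hkc hkA hG τ x) (hF' x).1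
    (ae_of_all _ fun μ y _ => ?bound) (hG.abs.const_mul _) (ae_of_all _ fun μ y _ => ?deriv)
  · rw [kernelConv, ← integral_const_mul]
    exact key.2
  case bound =>
    rw [norm_mul, norm_mul, Real.norm_eq_abs, Real.norm_eq_abs, Real.norm_eq_abs,
      mul_assoc, mul_comm B]
    gcongr
    exact hk'B _
  case deriv =>
    have hlin : HasDerivAt (fun y => τ * (y - μ)) τ y := by
      simpa using ((hasDerivAt_id y).sub_const μ).const_mul τ
    exact (((hk _).comp y hlin).const_mul (G μ)).congr_deriv (by ring)

end KernelConv

section GaussianDomination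

variable {g : ℝ → ℝ} {c a r : ℝ}

theorem abs_le_of_le_exp_neg_mul_cosh (hc : 0 ≤ c) (ha : 0 ≤ a) (hr : 1 ≤ r)
    (hg : ∀ x, 0 ≤ g x ∧ g x ≤ c * exp (-r * a * cosh x)) (x : ℝ) :
    |g x| ≤ c * exp (-r * a) * exp (-(a / 2) * x ^ 2) := by
  rw [abs_of_nonneg (hg x).1, mul_assoc]
  exact (hg x).2.trans (mul_le_mul_of_nonneg_left (exp_neg_mul_cosh_le hr ha x) hc)

theorem integrable_of_le_exp_neg_mul_cosh (hc : 0 ≤ c) (ha : 0 < a) (hr : 1 ≤ r)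
    (hgm : Measurable g) (hg : ∀ x, 0 ≤ g x ∧ g x ≤ c * exp (-r * a * cosh x)) :
    Integrable g :=
  ((integrable_exp_neg_mul_sq (half_pos ha)).const_mul _).mono' hgm.aestronglyMeasurable
    (ae_of_all _ (abs_le_of_le_exp_neg_mul_cosh hc ha.le hr hg))

theorem integral_abs_le_of_le_exp_neg_mul_cosh (hc : 0 ≤ c) (ha : 0 < a) (hr : 1 ≤ r)
    (hgm : Measurable g) (hg : ∀ x, 0 ≤ g x ∧ g x ≤ c * exp (-r * a * cosh x)) :
    ∫ x, |g x| ≤ c * exp (-r * a) * √(π / (a / 2)) := by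
  rw [← integral_gaussian, ← integral_const_mul]
  exact integral_mono (integrable_of_le_exp_neg_mul_cosh hc ha hr hgm hg).abs
    ((integrable_exp_neg_mul_sq (half_pos ha)).const_mul _)
    (abs_le_of_le_exp_neg_mul_cosh hc ha.le hr hg)

end GaussianDomination

section LukyanovPotential

variable {r τ N α M : ℝ} {g : ℝ → ℝ}

noncomputable def lukyanovPotential (r τ N α : ℝ) (g : ℝ → ℝ) (x : ℝ) : ℝ :=
  r / (N * τ) * cosh (τ * x) - α * x / N -
    (1 / (2 * π * N)) * ∫ μ : ℝ, g (τ * μ) / cosh (τ * (x - μ))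

theorem lukyanovPotential_eq_kernelConv (r τ N α : ℝ) (g : ℝ → ℝ) :
    lukyanovPotential r τ N α g = fun x => r / (N * τ) * cosh (τ * x) - α * x / N -
      1 / (2 * π * N) * kernelConv (fun t => (cosh t)⁻¹) τ (fun μ => g (τ * μ)) x := by
  funext x
  simp only [lukyanovPotential, kernelConv, div_eq_mul_inv]

theorem hasDerivAt_lukyanovPotential (hτ : τ ≠ 0) (hg : Integrable g) (x : ℝ) :
    HasDerivAt (lukyanovPotential r τ N α g) (r / N * sinh (τ * x) - α / N -
      τ / (2 * π * N) *
        kernelConv (fun t => -sinh t / cosh t ^ 2) τ (fun μ => g (τ * μ)) x) x := by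
  have hconv := hasDerivAt_kernelConv hasDerivAt_inv_cosh
    (continuous_sinh.neg.div (continuous_cosh.pow 2) fun t => (pow_pos (cosh_pos t) 2).ne')
    abs_inv_cosh_le_one abs_neg_sinh_div_cosh_sq_le_one (hg.comp_mul_left' hτ) τ x
  have hV : HasDerivAt (fun y => r / (N * τ) * cosh (τ * y) - α * y / N -
      1 / (2 * π * N) * kernelConv (fun t => (cosh t)⁻¹) τ (fun μ => g (τ * μ)) y)
      (r / (N * τ) * (sinh (τ * x) * (τ * 1)) - α * 1 / N -
        1 / (2 * π * N) * (τ * kernelConv (fun t => -sinh t / cosh t ^ 2) τ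
          (fun μ => g (τ * μ)) x)) x :=
    ((((hasDerivAt_id' x).const_mul τ).cosh.const_mul _).sub
      (((hasDerivAt_id' x).const_mul α).div_const N)).sub (hconv.const_mul _)
  rw [lukyanovPotential_eq_kernelConv]
  exact hV.congr_deriv (by field_simp)

theorem deriv_deriv_lukyanovPotential (hτ : τ ≠ 0) (hg : Integrable g) (x : ℝ) :
    deriv (deriv (lukyanovPotential r τ N α g)) x = r * τ / N * cosh (τ * x) -
      τ ^ 2 / (2 * π * N) * kernelConv (fun t => (2 * sinh t ^ 2 - cosh t ^ 2) / cosh t ^ 3) τ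
        (fun μ => g (τ * μ)) x := by
  have hconv := hasDerivAt_kernelConv hasDerivAt_neg_sinh_div_cosh_sq
    ((((continuous_sinh.pow 2).const_mul 2).sub (continuous_cosh.pow 2)).div
      (continuous_cosh.pow 3) fun t => (pow_pos (cosh_pos t) 3).ne')
    abs_neg_sinh_div_cosh_sq_le_one abs_two_sinh_sq_sub_cosh_sq_div_cosh_pow_three_le
    (hg.comp_mul_left' hτ) τ x
  have hV' : HasDerivAt (fun y => r / N * sinh (τ * y) - α / N - τ / (2 * π * N) *
      kernelConv (fun t => -sinh t / cosh t ^ 2) τ (fun μ => g (τ * μ)) y)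
      (r / N * (cosh (τ * x) * (τ * 1)) - τ / (2 * π * N) * (τ * kernelConv
        (fun t => (2 * sinh t ^ 2 - cosh t ^ 2) / cosh t ^ 3) τ (fun μ => g (τ * μ)) x)) x :=
    ((((hasDerivAt_id' x).const_mul τ).sinh.const_mul _).sub_const _).sub (hconv.const_mul _)
  have hderiv : deriv (lukyanovPotential r τ N α g) = fun y => r / N * sinh (τ * y) - α / N -
      τ / (2 * π * N) * kernelConv (fun t => -sinh t / cosh t ^ 2) τ (fun μ => g (τ * μ)) y :=
    funext fun y => (hasDerivAt_lukyanovPotential hτ hg y).deriv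
  rw [hderiv, hV'.deriv]
  ring

theorem le_deriv_deriv_lukyanovPotential (hτ : 0 < τ) (hN : 0 < N) (hr : 0 ≤ r)
    (hg : Integrable g) (hM : ∫ x, |g x| ≤ M) (x : ℝ) :
    τ / N * (r - 3 * M / (2 * π)) ≤ deriv (deriv (lukyanovPotential r τ N α g)) x := by
  have hcosh : r * τ / N ≤ r * τ / N * cosh (τ * x) :=
    le_mul_of_one_le_right (by positivity) (one_le_cosh _)
  have hrescale : ∫ μ, |g (τ * μ)| = τ⁻¹ * ∫ y, |g y| := by
    rw [Measure.integral_comp_mul_left (fun y => |g y|), abs_of_pos (inv_pos.2 hτ), smul_eq_mul]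
  have hconv : kernelConv (fun t => (2 * sinh t ^ 2 - cosh t ^ 2) / cosh t ^ 3) τ
      (fun μ => g (τ * μ)) x ≤ 3 * (τ⁻¹ * M) := by
    refine (le_abs_self _).trans ((abs_kernelConv_le
      abs_two_sinh_sq_sub_cosh_sq_div_cosh_pow_three_le (hg.comp_mul_left' hτ.ne') τ x).trans ?_)
    rw [hrescale]
    gcongr
  rw [deriv_deriv_lukyanovPotential hτ.ne' hg]
  calc τ / N * (r - 3 * M / (2 * π))
      = r * τ / N - τ ^ 2 / (2 * π * N) * (3 * (τ⁻¹ * M)) := by field_simp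
    _ ≤ _ := by gcongr

end LukyanovPotential

/-- Strict convexity of the rescaled Lukyanov potential for `r` large:
`V''(λ) ≥ (τ/N)(r − C e^{−r c'}) > 0`, with `C` independent of `r` and `N`. -/
theorem lukyanov_potential_strictly_convex (c c' : ℝ) (hc : 0 < c) (hc' : 0 < c') :
    ∃ C r₀ : ℝ, 0 < C ∧ 0 < r₀ ∧
      ∀ r : ℝ, r₀ ≤ r → ∀ N : ℝ, 1 ≤ N → 1 ≤ Real.log N → ∀ α : ℝ,
      ∀ g : ℝ → ℝ, Measurable g →
        (∀ μ : ℝ, 0 ≤ g μ ∧ g μ ≤ c * Real.exp (-r * c' * Real.cosh μ)) →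
        (StrictConvexOn ℝ Set.univ (fun lam : ℝ =>
            r / (N * Real.log N) * Real.cosh (Real.log N * lam) - α * lam / N -
              (1 / (2 * π * N)) *
                ∫ μ : ℝ, g (Real.log N * μ) / Real.cosh (Real.log N * (lam - μ))) ∧
          (0 < Real.log N / N * (r - C * Real.exp (-r * c'))) ∧
          ∀ lam : ℝ,
            Real.log N / N * (r - C * Real.exp (-r * c')) ≤
              deriv (deriv (fun x : ℝ =>
                r / (N * Real.log N) * Real.cosh (Real.log N * x) - α * x / N -
                  (1 / (2 * π * N)) *
                    ∫ μ : ℝ, g (Real.log N * μ) / Real.cosh (Real.log N * (x - μ)))) lam) := by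
  set K := √(π / (c' / 2))
  have hC : 0 < 3 * c * K / (2 * π) := by positivity
  refine ⟨3 * c * K / (2 * π), 3 * c * K / (2 * π) + 1, hC, by positivity, ?_⟩
  intro r hr N hN hτ α g hgm hg
  have hr1 : 1 ≤ r := by linarith
  have hgi := integrable_of_le_exp_neg_mul_cosh hc.le hc' hr1 hgm hg
  have hgM := integral_abs_le_of_le_exp_neg_mul_cosh hc.le hc' hr1 hgm hg
  have hV'' (x : ℝ) := le_deriv_deriv_lukyanovPotential (r := r) (α := α) (one_pos.trans_le hτ)
    (one_pos.trans_le hN) (by linarith) hgi hgM x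
  have hexp : exp (-r * c') ≤ 1 := exp_le_one_iff.2 (by nlinarith)
  have hpos : 0 < log N / N * (r - 3 * c * K / (2 * π) * exp (-r * c')) :=
    mul_pos (by positivity) (by nlinarith)
  have hbound (x : ℝ) : log N / N * (r - 3 * c * K / (2 * π) * exp (-r * c')) ≤
      deriv (deriv (lukyanovPotential r (log N) N α g)) x :=
    (hV'' x).trans_eq' (by ring)
  exact ⟨strictConvexOn_univ_of_deriv2_pos
    (continuous_iff_continuousAt.2 fun x => (hasDerivAt_lukyanovPotential
      (one_pos.trans_le hτ).ne' hgi x).continuousAt)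
    (fun x => hpos.trans_le (hbound x)), hpos, hbound⟩
end

section
/- Let χ₁₁ : {Im z > 0} → ℂ be holomorphic with continuous boundary values on ℝ and satisfy |χ₁₁(μ)| ≤ C/|μ|^{1/2} for |μ| ≥ 1 in the closed upper half-plane. Let g : ℝ → ℂ be C¹ with g, g' integrable, and b ∈ ℝ, τ > 0. Then ∫_{ℝ+iε'} χ₁₁(μ) ∫_b^{∞} g(η) e^{i τ μ (η−b)} dη dμ/(2πi) = 0 for any ε' > 0. -/
/-!
With `w = iτμ` the inner integral is `T(w) = ∫_b^∞ g(η) e^{w(η-b)} dη`, holomorphic for `Re w < 0`.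
One integration by parts (`g → 0` at `+∞` since `g` and `g'` are integrable) gives
`|w| |T(w)| ≤ |g(b)| + ‖g'‖₁`, so `χ(μ) T(iτμ)` is holomorphic in the upper half-plane and
`O(|μ|^{-3/2})`. For any such function decaying like `|μ|^{-p}` with `p > 1`, Cauchy's theorem on
rectangles, whose vertical sides contribute `O(R^{-p})`, shows that the horizontal line integral
does not depend on the height, while at height `M` it is `O(M^{-(p-1)/2})`; hence it vanishes.
-/

open Real Complex MeasureTheory Filter Set Topology

noncomputable def tailTransform (g : ℝ → ℂ) (b : ℝ) (w : ℂ) : ℂ :=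
  ∫ η in Ioi b, g η * cexp (w * (η - b))

section TailTransform

variable {g : ℝ → ℂ} {b η : ℝ} {w : ℂ}

theorem re_mul_ofReal_sub (w : ℂ) (η b : ℝ) : (w * ((η : ℂ) - b)).re = w.re * (η - b) := by
  simp

theorem norm_mul_cexp_mul_sub_le (v : ℂ) (hw : w.re ≤ 0) (hη : b ≤ η) :
    ‖v * cexp (w * (η - b))‖ ≤ ‖v‖ := by
  rw [norm_mul, norm_exp, re_mul_ofReal_sub]
  exact mul_le_of_le_one_right (norm_nonneg v)
    (Real.exp_le_one_iff.2 (mul_nonpos_of_nonpos_of_nonneg hw (sub_nonneg.2 hη)))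

theorem integrableOn_mul_cexp_mul_sub {v : ℝ → ℂ} (hv : Integrable v) (hw : w.re ≤ 0) :
    IntegrableOn (fun η : ℝ => v η * cexp (w * (η - b))) (Ioi b) :=
  hv.norm.integrableOn.mono'
    (hv.aestronglyMeasurable.restrict.mul (by fun_prop : Continuous _).aestronglyMeasurable)
    ((ae_restrict_mem measurableSet_Ioi).mono fun _ hη => norm_mul_cexp_mul_sub_le _ hw hη.le)

theorem norm_tailTransform_le_integral_norm {v : ℝ → ℂ} (hv : Integrable v) (hw : w.re ≤ 0) :
    ‖tailTransform v b w‖ ≤ ∫ η, ‖v η‖ :=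
  calc ‖tailTransform v b w‖ ≤ ∫ η in Ioi b, ‖v η‖ :=
        norm_integral_le_of_norm_le hv.norm.integrableOn <|
          (ae_restrict_mem measurableSet_Ioi).mono fun _ hη => norm_mul_cexp_mul_sub_le _ hw hη.le
    _ ≤ ∫ η, ‖v η‖ := setIntegral_le_integral hv.norm (.of_forall fun _ => norm_nonneg _)

theorem mul_tailTransform (hg : Differentiable ℝ g) (hgi : Integrable g)
    (hgi' : Integrable (deriv g)) (hw : w.re ≤ 0) :
    w * tailTransform g b w = -g b - tailTransform (deriv g) b w := by
  have hderiv : ∀ η : ℝ, HasDerivAt (fun η : ℝ => g η * cexp (w * (η - b)))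
      (deriv g η * cexp (w * (η - b)) + w * (g η * cexp (w * (η - b)))) η := by
    intro η
    have hlin : HasDerivAt (fun η : ℝ => w * ((η : ℂ) - b)) w η := by
      simpa using (((hasDerivAt_id (η : ℂ)).sub_const (b : ℂ)).const_mul w).comp_ofReal
    exact ((hg η).hasDerivAt.mul hlin.cexp).congr_deriv (by ring)
  have hg0 : Tendsto g atTop (𝓝 0) := tendsto_zero_of_hasDerivAt_of_integrableOn_Ioi (a := b)
    (fun η _ => (hg η).hasDerivAt) hgi'.integrableOn hgi.integrableOn
  have hlim : Tendsto (fun η : ℝ => g η * cexp (w * (η - b))) atTop (𝓝 0) :=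
    squeeze_zero_norm' ((eventually_ge_atTop b).mono fun _ hη => norm_mul_cexp_mul_sub_le _ hw hη)
      (tendsto_zero_iff_norm_tendsto_zero.1 hg0)
  have hint' := integrableOn_mul_cexp_mul_sub (b := b) hgi' hw
  have hint := (integrableOn_mul_cexp_mul_sub (b := b) hgi hw).const_mul w
  have hftc := integral_Ioi_of_hasDerivAt_of_tendsto' (fun η _ => hderiv η) (hint'.add hint) hlim
  rw [integral_add hint' hint, integral_const_mul] at hftc
  simp only [sub_self, mul_zero, Complex.exp_zero, mul_one, zero_sub] at hftc
  rw [tailTransform, tailTransform]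
  linear_combination hftc

theorem norm_mul_norm_tailTransform_le (hg : Differentiable ℝ g) (hgi : Integrable g)
    (hgi' : Integrable (deriv g)) (hw : w.re ≤ 0) :
    ‖w‖ * ‖tailTransform g b w‖ ≤ ‖g b‖ + ∫ η, ‖deriv g η‖ := by
  rw [← norm_mul, mul_tailTransform hg hgi hgi' hw, sub_eq_add_neg, ← neg_add, norm_neg]
  calc ‖g b + tailTransform (deriv g) b w‖ ≤ ‖g b‖ + ‖tailTransform (deriv g) b w‖ :=
        norm_add_le _ _
    _ ≤ ‖g b‖ + ∫ η, ‖deriv g η‖ := by gcongr; exact norm_tailTransform_le_integral_norm hgi' hw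

theorem mul_exp_neg_mul_le_inv {δ u : ℝ} (hδ : 0 < δ) : u * Real.exp (-(δ * u)) ≤ δ⁻¹ := by
  rw [Real.exp_neg, ← div_eq_mul_inv, div_le_iff₀ (Real.exp_pos _), inv_mul_eq_div, le_div_iff₀ hδ]
  linarith [Real.add_one_le_exp (δ * u)]

theorem norm_sub_mul_cexp_mul_sub_le {δ : ℝ} (hδ : 0 < δ) (hw : w.re ≤ -δ) (hη : b ≤ η) :
    ‖((η : ℂ) - b) * cexp (w * (η - b))‖ ≤ δ⁻¹ := by
  rw [norm_mul, norm_exp, re_mul_ofReal_sub, ← ofReal_sub, norm_real,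
    Real.norm_of_nonneg (sub_nonneg.2 hη)]
  calc (η - b) * Real.exp (w.re * (η - b)) ≤ (η - b) * Real.exp (-(δ * (η - b))) := by
        gcongr; nlinarith [sub_nonneg.2 hη]
    _ ≤ δ⁻¹ := mul_exp_neg_mul_le_inv hδ

theorem differentiableAt_tailTransform (hgi : Integrable g) {w₀ : ℂ} (hw₀ : w₀.re < 0) :
    DifferentiableAt ℂ (tailTransform g b) w₀ := by
  set δ := -w₀.re / 2 with hδ_def
  have hδ : 0 < δ := by linarith
  have hball : ∀ w ∈ Metric.ball w₀ δ, w.re ≤ -δ := by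
    intro w hw
    have := (abs_re_le_norm (w - w₀)).trans_lt (mem_ball_iff_norm.1 hw)
    rw [sub_re] at this
    linarith [(abs_lt.1 this).2]
  refine (hasDerivAt_integral_of_dominated_loc_of_deriv_le (μ := volume.restrict (Ioi b))
    (F := fun w η => g η * cexp (w * (η - b)))
    (F' := fun w η => g η * (((η : ℂ) - b) * cexp (w * (η - b))))
    (bound := fun η => ‖g η‖ * δ⁻¹) (Metric.ball_mem_nhds w₀ hδ) ?_
    (integrableOn_mul_cexp_mul_sub hgi hw₀.le) ?_ ?_ (hgi.norm.integrableOn.mul_const _)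
    ?_).2.differentiableAt
  · exact .of_forall fun w =>
      hgi.aestronglyMeasurable.restrict.mul (by fun_prop : Continuous _).aestronglyMeasurable
  · exact (hgi.aestronglyMeasurable.restrict).mul (by fun_prop : Continuous _).aestronglyMeasurable
  · filter_upwards [ae_restrict_mem measurableSet_Ioi] with η hη w hw
    rw [norm_mul]
    exact mul_le_mul_of_nonneg_left (norm_sub_mul_cexp_mul_sub_le hδ (hball w hw) hη.le)
      (norm_nonneg _)
  · refine .of_forall fun η w _ => ?_
    have : HasDerivAt (fun w : ℂ => w * ((η : ℂ) - b)) ((η : ℂ) - b) w := by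
      simpa using (hasDerivAt_id w).mul_const ((η : ℂ) - b)
    exact (this.cexp.const_mul (g η)).congr_deriv (by ring)

theorem differentiableOn_tailTransform (hgi : Integrable g) :
    DifferentiableOn ℂ (tailTransform g b) {w | w.re < 0} := fun _ hw =>
  (differentiableAt_tailTransform hgi hw).differentiableWithinAt

end TailTransform

def UpperHalfPlaneDecay (F : ℂ → ℂ) (D p : ℝ) : Prop :=
  ∀ z : ℂ, 0 < z.im → 1 ≤ ‖z‖ → ‖F z‖ ≤ D * ‖z‖ ^ (-p)

namespace UpperHalfPlaneDecay

variable {F : ℂ → ℂ} {D p : ℝ}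

theorem nonneg (h : UpperHalfPlaneDecay F D p) : 0 ≤ D := by
  simpa using (norm_nonneg _).trans (h I (by simp) (by simp))

theorem norm_le_abs_re_rpow (h : UpperHalfPlaneDecay F D p) (hp : 0 ≤ p) {z : ℂ}
    (hz : 0 < z.im) (hre : 1 ≤ |z.re|) : ‖F z‖ ≤ D * |z.re| ^ (-p) := by
  refine (h z hz (hre.trans (abs_re_le_norm z))).trans (mul_le_mul_of_nonneg_left ?_ h.nonneg)
  exact rpow_le_rpow_of_nonpos (by linarith) (abs_re_le_norm z) (by linarith)

/-- Split `‖z‖^{-p}` as `‖z‖^{-(p-1)/2} ‖z‖^{-(p+1)/2}`: the first factor decays in `Im z`, the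
second is integrable along horizontal lines. -/
theorem norm_le (h : UpperHalfPlaneDecay F D p) (hp : 1 ≤ p) {z : ℂ} (hz : 0 < z.im)
    (hz1 : 1 ≤ ‖z‖) :
    ‖F z‖ ≤
      D * 2 ^ ((p + 1) / 2) * z.im ^ (-((p - 1) / 2)) * (1 + |z.re|) ^ (-((p + 1) / 2)) := by
  have hz0 : 0 < ‖z‖ := one_pos.trans_le hz1
  have him : z.im ≤ ‖z‖ := (le_abs_self _).trans (abs_im_le_norm z)
  have hre : (1 + |z.re|) * 2⁻¹ ≤ ‖z‖ := by linarith [abs_re_le_norm z]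
  have hsplit : ‖z‖ ^ (-p) = ‖z‖ ^ (-((p - 1) / 2)) * ‖z‖ ^ (-((p + 1) / 2)) := by
    rw [← rpow_add hz0]; ring_nf
  have h1 : ‖z‖ ^ (-((p - 1) / 2)) ≤ z.im ^ (-((p - 1) / 2)) :=
    rpow_le_rpow_of_nonpos hz him (by linarith)
  have h2 : ‖z‖ ^ (-((p + 1) / 2)) ≤ 2 ^ ((p + 1) / 2) * (1 + |z.re|) ^ (-((p + 1) / 2)) := by
    calc ‖z‖ ^ (-((p + 1) / 2)) ≤ ((1 + |z.re|) * 2⁻¹) ^ (-((p + 1) / 2)) :=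
          rpow_le_rpow_of_nonpos (by positivity) hre (by linarith)
      _ = 2 ^ ((p + 1) / 2) * (1 + |z.re|) ^ (-((p + 1) / 2)) := by
          rw [mul_rpow (by positivity) (by norm_num), inv_rpow (by norm_num),
            ← rpow_neg (by norm_num), neg_neg, mul_comm]
  calc ‖F z‖ ≤ D * ‖z‖ ^ (-p) := h z hz hz1
    _ ≤ D * (z.im ^ (-((p - 1) / 2)) *
          (2 ^ ((p + 1) / 2) * (1 + |z.re|) ^ (-((p + 1) / 2)))) := by
        rw [hsplit]
        gcongr
        exact h.nonneg
    _ = _ := by ring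

theorem integrable_horizontal (hF : DifferentiableOn ℂ F {z | 0 < z.im})
    (h : UpperHalfPlaneDecay F D p) (hp : 1 < p) {y : ℝ} (hy : 0 < y) :
    Integrable fun t : ℝ => F (t + y * I) := by
  have hcont : Continuous fun t : ℝ => F (t + y * I) :=
    hF.continuousOn.comp_continuous (by fun_prop) fun t => by simpa using hy
  refine hcont.locallyIntegrable.integrable_of_isBigO_cocompact
    (g := fun t : ℝ => (1 + |t|) ^ (-((p + 1) / 2))) ?_ ?_
  · refine .of_bound (D * 2 ^ ((p + 1) / 2) * y ^ (-((p - 1) / 2))) ?_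
    filter_upwards [tendsto_norm_cocompact_atTop.eventually_ge_atTop 1] with t ht
    have hz1 : 1 ≤ ‖(t + y * I : ℂ)‖ := ht.trans (by simpa using abs_re_le_norm (t + y * I : ℂ))
    rw [Real.norm_of_nonneg (by positivity)]
    simpa using h.norm_le hp.le (by simpa using hy) hz1
  · exact (integrable_one_add_norm (by simp; linarith)).integrableAtFilter _

theorem tendsto_integral_horizontal_atTop (h : UpperHalfPlaneDecay F D p) (hp : 1 < p) :
    Tendsto (fun y : ℝ => ∫ t : ℝ, F (t + y * I)) atTop (𝓝 0) := by
  set c := D * 2 ^ ((p + 1) / 2) * ∫ t : ℝ, (1 + |t|) ^ (-((p + 1) / 2))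
  have hint : Integrable fun t : ℝ => (1 + |t|) ^ (-((p + 1) / 2)) := by
    simpa using
      integrable_one_add_norm (E := ℝ) (μ := volume) (r := (p + 1) / 2) (by simp; linarith)
  refine squeeze_zero_norm' (a := fun y => c * y ^ (-((p - 1) / 2))) ?_ ?_
  · filter_upwards [eventually_ge_atTop 1] with y hy
    have hbound : ∀ t : ℝ, ‖F (t + y * I)‖ ≤
        D * 2 ^ ((p + 1) / 2) * y ^ (-((p - 1) / 2)) * (1 + |t|) ^ (-((p + 1) / 2)) := by
      intro t
      simpa using h.norm_le hp.le (z := t + y * I) (by simp; linarith)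
        (hy.trans ((le_abs_self y).trans (by simpa using abs_im_le_norm (t + y * I : ℂ))))
    refine (norm_integral_le_of_norm_le (hint.const_mul _) (.of_forall hbound)).trans_eq ?_
    rw [integral_const_mul]; ring
  · simpa using (tendsto_rpow_neg_atTop (by linarith : 0 < (p - 1) / 2)).const_mul c

theorem tendsto_integral_vertical_cocompact (h : UpperHalfPlaneDecay F D p) (hp : 0 < p)
    {y M : ℝ} (hy : 0 < y) (hM : 0 < M) :
    Tendsto (fun x : ℝ => ∫ s in y..M, F (x + s * I)) (cocompact ℝ) (𝓝 0) := by
  refine squeeze_zero_norm' (a := fun x => D * |x| ^ (-p) * |M - y|) ?_ ?_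
  · filter_upwards [tendsto_norm_cocompact_atTop.eventually_ge_atTop 1] with x hx
    refine intervalIntegral.norm_integral_le_of_norm_le_const fun s hs => ?_
    have hs0 : 0 < s := (lt_min hy hM).trans_le (uIoc_subset_uIcc hs).1
    simpa using h.norm_le_abs_re_rpow hp.le (z := x + s * I) (by simpa using hs0)
      (by simpa using hx)
  · simpa using ((tendsto_rpow_neg_atTop hp).comp
      (tendsto_norm_cocompact_atTop (E := ℝ))).const_mul D |>.mul_const |M - y|

theorem integral_horizontal_eq (hF : DifferentiableOn ℂ F {z | 0 < z.im})
    (h : UpperHalfPlaneDecay F D p) (hp : 1 < p) {y M : ℝ} (hy : 0 < y) (hM : 0 < M) :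
    ∫ t : ℝ, F (t + y * I) = ∫ t : ℝ, F (t + M * I) := by
  have hrect : ∀ R : ℝ, ((∫ x in -R..R, F (x + y * I)) - ∫ x in -R..R, F (x + M * I)) +
      I • (∫ s in y..M, F (R + s * I)) - I • (∫ s in y..M, F ((-R : ℝ) + s * I)) = 0 := fun R =>
    integral_boundary_rect_eq_zero_of_differentiableOn F ⟨-R, y⟩ ⟨R, M⟩ <| hF.mono fun z hz =>
      (lt_min hy hM).trans_le (mem_reProdIm.1 hz).2.1
  have hvert := tendsto_integral_vertical_cocompact h (by linarith) hy hM
  have hlim := (((intervalIntegral_tendsto_integral (integrable_horizontal hF h hp hy)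
    tendsto_neg_atTop_atBot tendsto_id).sub (intervalIntegral_tendsto_integral
    (integrable_horizontal hF h hp hM) tendsto_neg_atTop_atBot tendsto_id)).add
    ((hvert.comp atTop_le_cocompact).const_smul I)).sub
    ((hvert.comp (tendsto_neg_atTop_atBot.mono_right atBot_le_cocompact)).const_smul I)
  simp only [smul_zero, add_zero, sub_zero] at hlim
  exact sub_eq_zero.1 (tendsto_nhds_unique hlim (tendsto_const_nhds.congr fun R => (hrect R).symm))

theorem integral_horizontal_eq_zero (hF : DifferentiableOn ℂ F {z | 0 < z.im})
    (h : UpperHalfPlaneDecay F D p) (hp : 1 < p) {y : ℝ} (hy : 0 < y) :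
    ∫ t : ℝ, F (t + y * I) = 0 :=
  tendsto_nhds_unique (tendsto_const_nhds.congr' <|
    (eventually_gt_atTop 0).mono fun _ hM => integral_horizontal_eq hF h hp hy hM)
    (tendsto_integral_horizontal_atTop h hp)

end UpperHalfPlaneDecay

theorem upperHalfPlaneDecay_mul_tailTransform {χ : ℂ → ℂ} {C : ℝ}
    (hχb : ∀ μ : ℂ, 0 ≤ μ.im → 1 ≤ ‖μ‖ → ‖χ μ‖ ≤ C / ‖μ‖ ^ ((1 : ℝ) / 2))
    {g : ℝ → ℂ} (hg : Differentiable ℝ g) (hgi : Integrable g) (hgi' : Integrable (deriv g))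
    (b : ℝ) {τ : ℝ} (hτ : 0 < τ) :
    UpperHalfPlaneDecay (fun μ => χ μ * tailTransform g b (I * τ * μ))
      (C * (‖g b‖ + ∫ η, ‖deriv g η‖) / τ) (3 / 2) := by
  intro μ hμ hμ1
  set K := ‖g b‖ + ∫ η, ‖deriv g η‖
  have hμ0 : 0 < ‖μ‖ := one_pos.trans_le hμ1
  have hT : ‖tailTransform g b (I * τ * μ)‖ ≤ K / (τ * ‖μ‖) := by
    rw [le_div_iff₀ (by positivity), mul_comm]
    simpa [abs_of_pos hτ] using
      norm_mul_norm_tailTransform_le (b := b) hg hgi hgi' (w := I * τ * μ) (by simp; positivity)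
  calc ‖χ μ * tailTransform g b (I * τ * μ)‖
      ≤ C / ‖μ‖ ^ ((1 : ℝ) / 2) * (K / (τ * ‖μ‖)) := by
        rw [norm_mul]
        exact mul_le_mul (hχb μ hμ.le hμ1) hT (norm_nonneg _)
          ((norm_nonneg _).trans (hχb μ hμ.le hμ1))
    _ = C * K / τ * ‖μ‖ ^ (-(3 / 2 : ℝ)) := by
        rw [show -(3 / 2 : ℝ) = -(1 / 2) + -1 by norm_num, rpow_add hμ0, rpow_neg hμ0.le,
          rpow_neg hμ0.le, rpow_one]
        field_simp

theorem tail_contribution_vanishes_general (χ : ℂ → ℂ) (C : ℝ)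
    (hχ : DifferentiableOn ℂ χ {z : ℂ | 0 < z.im})
    (hχb : ∀ μ : ℂ, 0 ≤ μ.im → 1 ≤ ‖μ‖ →
      ‖χ μ‖ ≤ C / ‖μ‖ ^ ((1 : ℝ) / 2))
    (g : ℝ → ℂ) (hg : ContDiff ℝ 1 g) (hgi : Integrable g) (hgi' : Integrable (deriv g))
    (b τ : ℝ) (hτ : 0 < τ) :
    ∀ ε' : ℝ, 0 < ε' →
      (∫ t : ℝ, χ (t + Complex.I * ε') *
          ∫ η in Set.Ioi b, g η * Complex.exp (Complex.I * τ * (t + Complex.I * ε') * (η - b)))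
        / (2 * Real.pi * Complex.I) = 0 := by
  intro ε' hε'
  have hF : DifferentiableOn ℂ (fun μ => χ μ * tailTransform g b (I * τ * μ)) {z | 0 < z.im} :=
    hχ.mul <| (differentiableOn_tailTransform hgi).comp (by fun_prop) fun μ (hμ : 0 < μ.im) => by
      simpa using mul_pos hτ hμ
  have hzero := UpperHalfPlaneDecay.integral_horizontal_eq_zero hF
    (upperHalfPlaneDecay_mul_tailTransform hχb (hg.differentiable one_ne_zero) hgi hgi' b hτ)
    (by norm_num) hε'
  simp_rw [mul_comm I (ε' : ℂ)]
  exact div_eq_zero_iff.2 (.inl hzero)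

/-- Vanishing of the right-tail contribution to the constraint functional:
if `χ₁₁` is holomorphic and `O(|μ|^{−1/2})` in the upper half-plane and `g` is `C¹`
with `g, g'` integrable, then `∫_{ℝ+iε'} χ₁₁(μ) ∫_b^∞ g(η) e^{iτμ(η−b)} dη dμ/(2πi) = 0`. -/
theorem tail_contribution_vanishes (χ : ℂ → ℂ) (C : ℝ)
    (hχ : DifferentiableOn ℂ χ {z : ℂ | 0 < z.im})
    (hχc : ContinuousOn χ {z : ℂ | 0 ≤ z.im})
    (hχb : ∀ μ : ℂ, 0 ≤ μ.im → 1 ≤ ‖μ‖ →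
      ‖χ μ‖ ≤ C / ‖μ‖ ^ ((1 : ℝ) / 2))
    (g : ℝ → ℂ) (hg : ContDiff ℝ 1 g) (hgi : Integrable g) (hgi' : Integrable (deriv g))
    (b τ : ℝ) (hτ : 0 < τ) :
    ∀ ε' : ℝ, 0 < ε' →
      (∫ t : ℝ, χ (t + Complex.I * ε') *
          ∫ η in Set.Ioi b, g η * Complex.exp (Complex.I * τ * (t + Complex.I * ε') * (η - b)))
        / (2 * Real.pi * Complex.I) = 0 :=
  tail_contribution_vanishes_general χ C hχ hχb g hg hgi hgi' b τ hτ
end
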